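/- arXiv:0911.1978 — 5 statements merged into one kernel-verified Lean document; each statement's English description precedes it below -/
import Mathlib

section
/- Suppose G is a critically s-chromatic finite simple graph and W is a maximal independent set of G such that χ(G[W]) = s + 1. Then the expansion G[W] is critically (s+1)-chromatic. -/
open SimpleGraph MvPolynomial

/-- The chromatic number of a graph, as a natural number: the least `m` such
that `G` has a proper `m`-coloring. -/
noncomputable def chromNum {V : Type*} (G : SimpleGraph V) : ℕ :=
  sInf {m | G.Colorable m}

/-- `G` is critically `s`-chromatic: `χ(G) = s` and deleting any vertex drops
the chromatic number to `s - 1`. -/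
def CriticallyChromatic {V : Type*} (G : SimpleGraph V) (s : ℕ) : Prop :=
  chromNum G = s ∧ ∀ v : V, chromNum (G.induce {v}ᶜ) = s - 1

/-- The expansion `G[W]` of a graph `G` at a set of vertices `W`: each vertex
`w ∈ W` is replaced by two adjacent copies (`Sum.inl w` and `Sum.inr w`), each
adjacent to (both copies of) the neighbors of `w`. -/
def expansion {V : Type*} (G : SimpleGraph V) (W : Set V) : SimpleGraph (V ⊕ W) :=
  SimpleGraph.fromRel (fun a b =>
    match a, b with
    | Sum.inl u, Sum.inl v => G.Adj u v
    | Sum.inl u, Sum.inr w => G.Adj u (w : V) ∨ u = (w : V)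
    | Sum.inr _, Sum.inl _ => False
    | Sum.inr w, Sum.inr w' => G.Adj (w : V) (w' : V))

/-- The `s`-th expansion `G^s` of `G`: every vertex is replaced by a clique of
size `s` (its shadows), and shadows of adjacent vertices are adjacent. -/
def nExpansion {V : Type*} (G : SimpleGraph V) (s : ℕ) : SimpleGraph (V × Fin s) :=
  SimpleGraph.fromRel (fun a b => G.Adj a.1 b.1 ∨ a.1 = b.1)

/-- `W` is an independent set of `G`. -/
def IsIndepSet {V : Type*} (G : SimpleGraph V) (W : Set V) : Prop :=
  ∀ ⦃u v⦄, u ∈ W → v ∈ W → ¬ G.Adj u v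

/-- `W` is a maximal independent set of `G`. -/
def IsMaxIndepSet {V : Type*} (G : SimpleGraph V) (W : Set V) : Prop :=
  _root_.IsIndepSet G W ∧ ∀ W', _root_.IsIndepSet G W' → W ⊆ W' → W = W'

/-- `W` is a vertex cover of `G`. -/
def IsVertexCover {V : Type*} (G : SimpleGraph V) (W : Set V) : Prop :=
  ∀ ⦃u v⦄, G.Adj u v → u ∈ W ∨ v ∈ W

/-- `W` is a minimal vertex cover of `G`. -/
def IsMinVertexCover {V : Type*} (G : SimpleGraph V) (W : Set V) : Prop :=
  _root_.IsVertexCover G W ∧ ∀ W' ⊆ W, _root_.IsVertexCover G W' → W' = W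

/-- `G` has a `b`-fold coloring using (at most) `d` colors: each vertex gets a
set of `b` colors, adjacent vertices getting disjoint sets. -/
def FoldColorable {V : Type*} (G : SimpleGraph V) (b d : ℕ) : Prop :=
  ∃ f : V → Finset (Fin d), (∀ v, (f v).card = b) ∧
    ∀ ⦃u v⦄, G.Adj u v → Disjoint (f u) (f v)

/-- The `b`-fold chromatic number `χ_b(G)`. -/
noncomputable def foldChromNum {V : Type*} (G : SimpleGraph V) (b : ℕ) : ℕ :=
  sInf {d | FoldColorable G b d}

/-- The fractional chromatic number `χ_f(G) = inf_b χ_b(G)/b`. -/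
noncomputable def fracChromNum {V : Type*} (G : SimpleGraph V) : ℝ :=
  ⨅ b : ℕ+, (foldChromNum G b : ℝ) / (b : ℝ)

/-- The cover ideal `J(G) = ⋂_{{i,j} ∈ E(G)} (x_i, x_j)` of a graph `G` on
`{x_1, …, x_n}`, inside `k[x_1, …, x_n]`. -/
noncomputable def coverIdeal (k : Type*) [Field k] {n : ℕ} (G : SimpleGraph (Fin n)) :
    Ideal (MvPolynomial (Fin n) k) :=
  ⨅ (i : Fin n) (j : Fin n) (_ : G.Adj i j),
    Ideal.span {MvPolynomial.X i, MvPolynomial.X j}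

/- Deleting a vertex lowers the chromatic number by at most one, so `χ(G[W] \ x) ≥ s`.
Conversely, let `v` be the vertex of `G` of which `x` is a copy. Colour `G \ v` with `s - 1`
colours and give one new colour to the remaining copies of `v` together with the second copies of
all vertices of `W`. These form an independent set of `G[W] \ x`: `W` is independent, and if
the first copy of `v` survives, then `x` is its second copy, so `v ∈ W` is adjacent to no vertex
of `W`. Hence `χ(G[W] \ x) ≤ s`. -/

section chromNum

variable {V : Type*} (G : SimpleGraph V)

lemma chromNum_le {n : ℕ} (h : G.Colorable n) : chromNum G ≤ n :=
  Nat.sInf_le h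

lemma colorable_chromNum {n : ℕ} (h : G.Colorable n) : G.Colorable (chromNum G) :=
  Nat.sInf_mem (s := {m | G.Colorable m}) ⟨n, h⟩

-- `chromNum G = sInf ∅ = 0` when `G` has no finite coloring.
lemma colorable_chromNum_of_ne_zero (h : chromNum G ≠ 0) : G.Colorable (chromNum G) := by
  by_contra hc
  exact h (Nat.sInf_eq_zero.mpr (Or.inr (Set.eq_empty_of_forall_notMem fun n hn =>
    hc (colorable_chromNum G hn))))

end chromNum

lemma colorable_succ_of_isIndepSet {V : Type*} {G : SimpleGraph V} {S : Set V} {k : ℕ}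
    (hS : _root_.IsIndepSet G S) (hk : (G.induce Sᶜ).Colorable k) : G.Colorable (k + 1) := by
  classical
  obtain ⟨c⟩ := hk
  refine ⟨Coloring.mk (fun v => if h : v ∈ S then Fin.last k else (c ⟨v, h⟩).castSucc) ?_⟩
  intro u v huv
  by_cases hu : u ∈ S <;> by_cases hv : v ∈ S
  · exact absurd huv (hS hu hv)
  · simpa [hu, hv] using (Fin.castSucc_ne_last _).symm
  · simp [hu, hv]
  · simpa [hu, hv] using c.valid (show (G.induce Sᶜ).Adj ⟨u, hu⟩ ⟨v, hv⟩ from huv)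

lemma chromNum_le_chromNum_induce_compl_add_one {V : Type*} {G : SimpleGraph V} {n : ℕ}
    (hG : G.Colorable n) (x : V) : chromNum G ≤ chromNum (G.induce {x}ᶜ) + 1 := by
  have hx : _root_.IsIndepSet G {x} := by
    rintro u v rfl rfl
    exact G.irrefl
  exact chromNum_le G (colorable_succ_of_isIndepSet hx
    (colorable_chromNum _ (hG.of_hom (Embedding.induce _).toHom)))

section expansion

variable {V : Type*} {G : SimpleGraph V} {W : Set V}

@[simp] lemma expansion_adj_inl_inl {u v : V} :
    (expansion G W).Adj (.inl u) (.inl v) ↔ G.Adj u v := by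
  simp only [expansion, fromRel_adj, ne_eq, Sum.inl.injEq]
  exact ⟨fun h => h.2.elim id (·.symm), fun h => ⟨h.ne, .inl h⟩⟩

@[simp] lemma expansion_adj_inl_inr {u : V} {w : W} :
    (expansion G W).Adj (.inl u) (.inr w) ↔ G.Adj u w ∨ u = w := by
  simp [expansion]

@[simp] lemma expansion_adj_inr_inr {w w' : W} :
    (expansion G W).Adj (.inr w) (.inr w') ↔ G.Adj w w' := by
  simp only [expansion, fromRel_adj, ne_eq, Sum.inr.injEq]
  exact ⟨fun h => h.2.elim id (·.symm), fun h => ⟨fun e => h.ne (congrArg _ e), .inl h⟩⟩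

def expansionOrigin : V ⊕ W → V := Sum.elim id (↑)

@[simp] lemma expansionOrigin_inl (u : V) : expansionOrigin (.inl u : V ⊕ W) = u := rfl

lemma isIndepSet_expansion_origin_diff (hW : _root_.IsIndepSet G W) (x : V ⊕ W) :
    _root_.IsIndepSet (expansion G W)
      ({y | expansionOrigin y = expansionOrigin x ∨ y.isRight} \ {x}) := by
  have not_adj_inl_inr : ∀ (u : V) (w : W), u = expansionOrigin x →
      Sum.inl u ≠ x → Sum.inr w ≠ x → ¬(expansion G W).Adj (.inl u) (.inr w) := by
    rintro u w rfl hux hwx hadj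
    obtain ⟨w₀, rfl⟩ : ∃ w₀, x = .inr w₀ := by
      cases x with
      | inl v => exact absurd rfl hux
      | inr w₀ => exact ⟨w₀, rfl⟩
    rcases expansion_adj_inl_inr.mp hadj with h | h
    · exact hW w₀.2 w.2 h
    · exact hwx (congrArg _ (Subtype.ext h.symm))
  rintro (u | w) (u' | w') ⟨hy, hyx⟩ ⟨hz, hzx⟩ hadj
  · obtain rfl : u = expansionOrigin x := by simpa using hy
    obtain rfl : u' = expansionOrigin x := by simpa using hz
    exact G.irrefl (expansion_adj_inl_inl.mp hadj)
  · exact not_adj_inl_inr u w' (by simpa using hy) hyx hzx hadj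
  · exact not_adj_inl_inr u' w (by simpa using hz) hzx hyx hadj.symm
  · exact hW w.2 w'.2 (expansion_adj_inr_inr.mp hadj)

lemma colorable_expansion_induce_compl (hW : _root_.IsIndepSet G W) (x : V ⊕ W) {k : ℕ}
    (hk : (G.induce {expansionOrigin x}ᶜ).Colorable k) :
    ((expansion G W).induce {x}ᶜ).Colorable (k + 1) := by
  refine colorable_succ_of_isIndepSet
    (S := Subtype.val ⁻¹' {y | expansionOrigin y = expansionOrigin x ∨ y.isRight})
    (fun y z hy hz => isIndepSet_expansion_origin_diff hW x ⟨hy, y.2⟩ ⟨hz, z.2⟩)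
    (hk.of_hom ?_)
  refine ⟨fun y => ⟨expansionOrigin y.1.1, fun h => y.2 (.inl h)⟩, ?_⟩
  rintro ⟨⟨u | w, _⟩, hy⟩ ⟨⟨u' | w', _⟩, hz⟩ hadj
  · exact show G.Adj u u' from expansion_adj_inl_inl.mp hadj
  all_goals simp at hy hz

end expansion

theorem expansion_at_maxIndep_critical_general {V : Type}
    (G : SimpleGraph V) (s : ℕ) (hG : CriticallyChromatic G s)
    (W : Set V) (hW : IsMaxIndepSet G W)
    (hchi : chromNum (expansion G W) = s + 1) :
    CriticallyChromatic (expansion G W) (s + 1) := by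
  set H := expansion G W
  have hH : H.Colorable (s + 1) := hchi ▸ colorable_chromNum_of_ne_zero H (by omega)
  have hGs : G.Colorable (s + 1) := hH.of_hom ⟨Sum.inl, expansion_adj_inl_inl.mpr⟩
  have hs : s ≠ 0 := by
    rintro rfl
    have : IsEmpty V := colorable_zero_iff.mp (hG.1 ▸ colorable_chromNum G hGs)
    have := chromNum_le H (.of_isEmpty 0)
    omega
  refine ⟨hchi, fun x => le_antisymm ?_ ?_⟩
  · have hGx := colorable_chromNum _ (hGs.of_hom (Embedding.induce {expansionOrigin x}ᶜ).toHom)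
    rw [hG.2] at hGx
    exact Nat.sub_one_add_one hs ▸ chromNum_le _ (colorable_expansion_induce_compl hW.1 x hGx)
  · have := chromNum_le_chromNum_induce_compl_add_one hH x
    omega

/-- If `G` is critically `s`-chromatic and `W` is a maximal
independent set with `χ(G[W]) = s + 1`, then `G[W]` is critically
`(s+1)`-chromatic. -/
theorem expansion_at_maxIndep_critical {V : Type} [Fintype V]
    (G : SimpleGraph V) (s : ℕ) (hG : CriticallyChromatic G s)
    (W : Set V) (hW : IsMaxIndepSet G W)
    (hchi : chromNum (expansion G W) = s + 1) :
    CriticallyChromatic (expansion G W) (s + 1) :=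
  expansion_at_maxIndep_critical_general G s hG W hW hchi
end

section
/- Let G be a finite simple graph on vertices {x_1,...,x_n} with cover ideal J(G) ⊆ R = k[x_1,...,x_n], let W ⊆ V_G be any subset of vertices, and set G' = G[W], the expansion of G at W. Then for every integer b ≥ 1, the monomial (x_1 ⋯ x_n)^{χ_b(G') − b} / m_W^b belongs to J(G)^{χ_b(G')}, where m_W = ∏_{x_i ∈ W} x_i; that is, the monomial with exponent χ_b(G') − 2b on each variable in W and exponent χ_b(G') − b on each variable not in W lies in J(G)^{χ_b(G')}. -/
open SimpleGraph MvPolynomial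

/-! Take a `b`-fold colouring `f` of `G[W]` with `c = χ_b(G[W])` colours and give each vertex `v`
of `G` the colours of its copies: `b` of them, or `2b` if `v ∈ W`, since the two copies are
adjacent. Adjacent vertices of `G` have pairwise adjacent copies, so they get disjoint colour sets;
hence for every colour `t` the vertices not coloured `t` form a vertex cover `C_t` of `G`, whose
monomial lies in `J(G)`. The product of the `c` monomials of the `C_t` lies in `J(G)^c`, and its
exponent at `x_v` is the number of colours missing at `v`, namely `c - b` or `c - 2b`. -/

open Finset

lemma Finset.prod_prod_filter_eq_prod_pow_card {ι σ M : Type*} [Fintype ι] [Fintype σ]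
    [CommMonoid M] (p : ι → σ → Prop) [∀ t v, Decidable (p t v)] (f : σ → M) :
    ∏ t, ∏ v with p t v, f v = ∏ v, f v ^ #{t | p t v} := by
  rw [prod_comm' (t' := univ) (s' := fun v => {t | p t v}) (by simp)]
  simp

lemma prod_X_mem_coverIdeal {k : Type*} [Field k] {n : ℕ} {G : SimpleGraph (Fin n)}
    {C : Finset (Fin n)} (hC : G.IsVertexCover C) :
    ∏ i ∈ C, (X i : MvPolynomial (Fin n) k) ∈ coverIdeal k G := by
  simp only [coverIdeal, Ideal.mem_iInf]
  intro i j hij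
  rcases hC hij with h | h <;>
    exact Ideal.mem_of_dvd _ (dvd_prod_of_mem _ h) (Ideal.subset_span (by simp))

lemma isVertexCover_setOf_notMem {V ι : Type*} {G : SimpleGraph V} {g : V → Finset ι}
    (hg : ∀ ⦃u v⦄, G.Adj u v → Disjoint (g u) (g v)) (t : ι) :
    G.IsVertexCover {v | t ∉ g v} := by
  intro u v huv
  simp only [Set.mem_ofPred_eq, ← not_and_or]
  exact fun ⟨hu, hv⟩ => Finset.disjoint_left.mp (hg huv) hu hv

lemma prod_X_pow_card_compl_mem_coverIdeal_pow {k ι : Type*} [Field k] [Fintype ι]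
    [DecidableEq ι] {n : ℕ} {G : SimpleGraph (Fin n)} {g : Fin n → Finset ι}
    (hg : ∀ ⦃u v⦄, G.Adj u v → Disjoint (g u) (g v)) :
    ∏ v, (X v : MvPolynomial (Fin n) k) ^ (Fintype.card ι - (g v).card) ∈
      coverIdeal k G ^ Fintype.card ι := by
  have hcover : ∀ t, ∏ v with t ∉ g v, (X v : MvPolynomial (Fin n) k) ∈ coverIdeal k G :=
    fun t => prod_X_mem_coverIdeal (by simpa using isVertexCover_setOf_notMem hg t)
  have := Ideal.prod_mem_prod (s := univ) fun t _ => hcover t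
  rw [prod_const, card_univ, prod_prod_filter_eq_prod_pow_card] at this
  simpa [filter_not, card_sdiff] using this

section expansion
variable {V ι : Type*} {G : SimpleGraph V} {W : Set V}

lemma expansion_adj_of_adj {a b : V ⊕ W}
    (h : G.Adj (Sum.elim id Subtype.val a) (Sum.elim id Subtype.val b)) :
    (expansion G W).Adj a b := by
  rcases a with u | ⟨u, hu⟩ <;> rcases b with v | ⟨v, hv⟩ <;>
    simp only [Sum.elim_inl, Sum.elim_inr, id] at h <;> simp [expansion, h, h.ne, h.symm]

lemma expansion_adj_inl_inr_s4 (w : W) : (expansion G W).Adj (Sum.inl w) (Sum.inr w) := by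
  simp [expansion]

variable [DecidablePred (· ∈ W)] [DecidableEq ι]

def colorsOnCopies (f : V ⊕ W → Finset ι) (v : V) : Finset ι :=
  f (Sum.inl v) ∪ if h : v ∈ W then f (Sum.inr ⟨v, h⟩) else ∅

lemma mem_colorsOnCopies {f : V ⊕ W → Finset ι} {v : V} {t : ι} :
    t ∈ colorsOnCopies f v ↔ ∃ a, Sum.elim id Subtype.val a = v ∧ t ∈ f a := by
  unfold colorsOnCopies
  split_ifs with hv
  · simp [Sum.exists, hv]
  · simp_all [Sum.exists]

lemma disjoint_colorsOnCopies {f : V ⊕ W → Finset ι}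
    (hf : ∀ ⦃a b⦄, (expansion G W).Adj a b → Disjoint (f a) (f b)) ⦃u v : V⦄ (huv : G.Adj u v) :
    Disjoint (colorsOnCopies f u) (colorsOnCopies f v) := by
  simp only [Finset.disjoint_left, mem_colorsOnCopies]
  rintro t ⟨a, rfl, hta⟩ ⟨b, rfl, htb⟩
  exact Finset.disjoint_left.mp (hf (expansion_adj_of_adj huv)) hta htb

lemma card_colorsOnCopies {f : V ⊕ W → Finset ι} {b : ℕ} (hcard : ∀ a, (f a).card = b)
    (hf : ∀ ⦃a b⦄, (expansion G W).Adj a b → Disjoint (f a) (f b)) (v : V) :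
    (colorsOnCopies f v).card = if v ∈ W then 2 * b else b := by
  unfold colorsOnCopies
  split_ifs with hv
  · rw [card_union_of_disjoint (hf (expansion_adj_inl_inr_s4 ⟨v, hv⟩)), hcard, hcard, two_mul]
  · rw [union_empty, hcard]

end expansion

lemma foldColorable_foldChromNum {V : Type*} {G : SimpleGraph V} {b : ℕ}
    (h : 0 < foldChromNum G b) : FoldColorable G b (foldChromNum G b) :=
  Nat.sInf_mem (Nat.nonempty_of_pos_sInf h)

theorem monomial_mem_coverIdeal_pow_general {k : Type} [Field k] {n : ℕ}
    (G : SimpleGraph (Fin n)) (W : Finset (Fin n)) (b : ℕ) :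
    (∏ i : Fin n, (MvPolynomial.X i : MvPolynomial (Fin n) k) ^
        (if i ∈ W then foldChromNum (expansion G (W : Set (Fin n))) b - 2 * b
          else foldChromNum (expansion G (W : Set (Fin n))) b - b)) ∈
      (coverIdeal k G) ^ (foldChromNum (expansion G (W : Set (Fin n))) b) := by
  obtain hc | hc := Nat.eq_zero_or_pos (foldChromNum (expansion G (W : Set (Fin n))) b)
  · simp [hc]
  obtain ⟨f, hcard, hf⟩ := foldColorable_foldChromNum hc
  convert prod_X_pow_card_compl_mem_coverIdeal_pow (k := k) (disjoint_colorsOnCopies hf)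
    using 3 with i
  · exact (Fintype.card_fin _).symm
  · simp only [card_colorsOnCopies hcard hf, Fintype.card_fin, mem_coe]
    split_ifs <;> rfl

/-- For any `W ⊆ V_G` and `b ≥ 1`, setting `G' = G[W]` and
`c = χ_b(G')`, the monomial `(x_1 ⋯ x_n)^{c−b} / m_W^b` — i.e. the monomial
with exponent `c − 2b` on each variable in `W` and exponent `c − b` on each
variable not in `W` — lies in `J(G)^c`. -/
theorem monomial_mem_coverIdeal_pow {k : Type} [Field k] {n : ℕ}
    (G : SimpleGraph (Fin n)) (W : Finset (Fin n)) (b : ℕ) (hb : 1 ≤ b) :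
    (∏ i : Fin n, (MvPolynomial.X i : MvPolynomial (Fin n) k) ^
        (if i ∈ W then foldChromNum (expansion G (W : Set (Fin n))) b - 2 * b
          else foldChromNum (expansion G (W : Set (Fin n))) b - b)) ∈
      (coverIdeal k G) ^ (foldChromNum (expansion G (W : Set (Fin n))) b) :=
  monomial_mem_coverIdeal_pow_general G W b
end

section
/- Let G = C_{2n+1}^c be the complement of the odd cycle on 2n+1 vertices with n ≥ 2 (a critically (n+1)-chromatic graph). Then there exists a subset W ⊆ V_G such that the expansion G[W] is a critically (n+2)-chromatic graph. -/
open SimpleGraph MvPolynomial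

/-!
Take `W = {0, 1}` and write `H = C_{2n+1}^c[W]`. Projecting the copies back onto `0` and `1` is a
homomorphism from the complement of `H` to `C_{2n+1}`, which is triangle-free, so every colour class
of `H` has at most two vertices and `H`, having `2n + 3` vertices, is not `(n + 1)`-colourable.
On the other hand the complement of `H` contains the Hamiltonian cycle `0, 1, 0', 1', 2, …, 2n`,
so `H` is a spanning subgraph of `C_{2n+3}^c`; deleting a vertex of `C_{2n+3}^c` leaves the
complement of a path on `2n + 2` vertices, which is `(n + 1)`-colourable by pairing consecutive
vertices. A graph that is not `s`-colourable while all its vertex-deleted subgraphs are is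
critically `(s + 1)`-chromatic.
-/

namespace SimpleGraph

variable {V V' : Type*} {G : SimpleGraph V} {G' : SimpleGraph V'}

lemma Colorable.succ_of_induce_compl_singleton {x : V} {k : ℕ}
    (h : (G.induce {x}ᶜ).Colorable k) : G.Colorable (k + 1) := by
  classical
  obtain ⟨C⟩ := h
  refine ⟨Coloring.mk
    (fun v => if hv : v = x then Fin.last k else (C ⟨v, hv⟩).castSucc) fun {u v} huv => ?_⟩
  by_cases hu : u = x <;> by_cases hv : v = x <;> simp only [hu, hv, dite_true, dite_false]
  · subst hu hv; exact (G.loopless.irrefl _ huv).elim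
  · exact (Fin.castSucc_lt_last _).ne'
  · exact (Fin.castSucc_lt_last _).ne
  · exact fun hC => C.valid (by simpa using huv) (Fin.castSucc_injective _ hC)

lemma Colorable.induce_compl_singleton_of_injective (f : G →g G') (hf : Function.Injective f)
    {x : V} {k : ℕ} (h : (G'.induce {f x}ᶜ).Colorable k) : (G.induce {x}ᶜ).Colorable k :=
  h.of_hom
    { toFun := fun v => ⟨f v, fun hv => v.2 (hf hv)⟩
      map_rel' := fun huv => f.map_adj huv }

lemma card_le_two_mul_of_colorable [Fintype V] (hG : Gᶜ.CliqueFree 3) {m : ℕ}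
    (hc : G.Colorable m) : Fintype.card V ≤ 2 * m := by
  classical
  obtain ⟨C⟩ := hc
  have hclass : ∀ c : Fin m, (Finset.univ.filter fun v => C v = c).card ≤ 2 := by
    intro c
    by_contra! hlt
    obtain ⟨t, hts, ht⟩ := Finset.exists_subset_card_eq hlt
    refine hG t ⟨fun u hu v hv huv => ⟨huv, fun hadj => C.valid hadj ?_⟩, ht⟩
    rw [(Finset.mem_filter.mp (hts hu)).2, (Finset.mem_filter.mp (hts hv)).2]
  simpa [mul_comm] using
    Finset.card_le_mul_card_image_of_maps_to (fun v _ => Finset.mem_univ (C v)) 2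
      fun c _ => hclass c

lemma CliqueFree.of_hom (f : G →g G') {k : ℕ} (h : G'.CliqueFree k) : G.CliqueFree k := by
  classical
  intro s hs
  have hinj : Set.InjOn f s := fun a ha b hb hab => by
    by_contra hne
    exact (f.map_adj (hs.isClique ha hb hne)).ne hab
  refine h (s.image f) ⟨?_, by rw [Finset.card_image_of_injOn hinj, hs.card_eq]⟩
  intro _ hfa _ hfb hab
  obtain ⟨a, ha, rfl⟩ := Finset.mem_image.mp hfa
  obtain ⟨b, hb, rfl⟩ := Finset.mem_image.mp hfb
  exact f.map_adj (hs.isClique ha hb fun h => hab (h ▸ rfl))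

end SimpleGraph

section CriticallyChromatic

variable {V : Type*} {G : SimpleGraph V}

lemma chromNum_eq_of_colorable {m : ℕ} (h : G.Colorable m) (h' : ∀ k < m, ¬ G.Colorable k) :
    chromNum G = m :=
  le_antisymm (Nat.sInf_le h) (le_csInf ⟨m, h⟩ fun k hk => not_lt.mp fun hlt => h' k hlt hk)

lemma criticallyChromatic_succ [Nonempty V] {s : ℕ} (h : ¬ G.Colorable s)
    (hdel : ∀ x, (G.induce {x}ᶜ).Colorable s) : CriticallyChromatic G (s + 1) := by
  refine ⟨chromNum_eq_of_colorable (hdel (Classical.arbitrary V)).succ_of_induce_compl_singleton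
    fun k hk hG => h (hG.mono (Nat.le_of_lt_succ hk)), fun x => ?_⟩
  rw [Nat.add_sub_cancel]
  exact chromNum_eq_of_colorable (hdel x)
    fun k hk hGx => h (hGx.succ_of_induce_compl_singleton.mono hk)

end CriticallyChromatic

section CycleGraph

lemma cycleGraph_adj_iff_val {N : ℕ} (hN : 2 ≤ N) {a b : Fin N} :
    (cycleGraph N).Adj a b ↔ a.val = b.val + 1 ∨ b.val = a.val + 1 ∨
      (a.val = 0 ∧ b.val + 1 = N) ∨ (b.val = 0 ∧ a.val + 1 = N) := by
  have hsub : ∀ a b : Fin N,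
      (a - b).val = 1 ↔ a.val = b.val + 1 ∨ (a.val = 0 ∧ b.val + 1 = N) := by
    intro a b
    rw [Fin.val_sub]
    rcases Nat.lt_or_ge (N - b.val + a.val) N with h | h
    · rw [Nat.mod_eq_of_lt h]; omega
    · rw [Nat.mod_eq_sub_mod h, Nat.mod_eq_of_lt (by omega)]; omega
  rw [cycleGraph_adj', hsub, hsub]
  omega

lemma cycleGraph_adj_sub_right {N : ℕ} [NeZero N] {a b : Fin N} (c : Fin N) :
    (cycleGraph N).Adj (a - c) (b - c) ↔ (cycleGraph N).Adj a b := by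
  simp only [cycleGraph_adj', sub_sub_sub_cancel_right]

lemma cycleGraph_cliqueFree_three {N : ℕ} (hN : 4 ≤ N) : (cycleGraph N).CliqueFree 3 := by
  classical
  intro s hs
  obtain ⟨a, b, c, hab, hac, hbc, -⟩ := is3Clique_iff.mp hs
  rw [cycleGraph_adj_iff_val (by omega)] at hab hac hbc
  omega

/-- The colour classes are the non-edges `{x + 2i + 1, x + 2i + 2}` of the odd antihole. -/
lemma compl_cycleGraph_induce_compl_singleton_colorable (m : ℕ) (x : Fin (2 * m + 1)) :
    ((cycleGraph (2 * m + 1))ᶜ.induce {x}ᶜ).Colorable m := by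
  have hpos : ∀ y : ({x}ᶜ : Set (Fin (2 * m + 1))), 1 ≤ (y.1 - x).val := fun y =>
    Nat.one_le_iff_ne_zero.mpr fun h => y.2 (sub_eq_zero.mp (Fin.ext h))
  refine ⟨Coloring.mk (fun y => ⟨((y.1 - x).val - 1) / 2, ?_⟩) fun {y z} hyz hc => ?_⟩
  · have := (y.1 - x).isLt
    have := hpos y
    omega
  · have hne : (y.1 - x).val ≠ (z.1 - x).val :=
      fun h => hyz.1 (sub_left_injective (Fin.ext h))
    have hcol : ((y.1 - x).val - 1) / 2 = ((z.1 - x).val - 1) / 2 := congrArg Fin.val hc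
    have hy := hpos y
    have hz := hpos z
    have hadj : (cycleGraph (2 * m + 1)).Adj (y.1 - x) (z.1 - x) :=
      (cycleGraph_adj_iff_val (by omega)).mpr (by omega)
    exact hyz.2 ((cycleGraph_adj_sub_right x).mp hadj)

end CycleGraph

section Expansion

variable {V : Type*} {G : SimpleGraph V} {W : Set V}

def expansionProj : V ⊕ W → V := Sum.elim id Subtype.val

lemma expansion_adj_iff {u v : V ⊕ W} :
    (expansion G W).Adj u v ↔ u ≠ v ∧
      (G.Adj (expansionProj u) (expansionProj v) ∨ expansionProj u = expansionProj v) := by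
  rcases u with a | w <;> rcases v with b | w' <;>
    simp only [expansion, fromRel_adj, expansionProj, Sum.elim_inl, Sum.elim_inr, id, ne_eq,
      Sum.inl.injEq, Sum.inr.injEq, reduceCtorEq, not_false_iff, true_and, or_false, false_or,
      Subtype.ext_iff] <;>
    grind [G.adj_comm, G.loopless.irrefl]

def expansionComplHom : (expansion G W)ᶜ →g Gᶜ where
  toFun := expansionProj
  map_rel' {u v} h := by
    rw [compl_adj, expansion_adj_iff] at h
    exact ⟨fun he => h.2 ⟨h.1, Or.inr he⟩, fun ha => h.2 ⟨h.1, Or.inl ha⟩⟩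

lemma cliqueFree_compl_expansion {k : ℕ} (h : Gᶜ.CliqueFree k) :
    (expansion G W)ᶜ.CliqueFree k :=
  CliqueFree.of_hom expansionComplHom h

end Expansion

section OddAntihole

variable {n : ℕ}

lemma val_le_one_of_mem_zero_one (w : ({0, 1} : Set (Fin (2 * n + 1)))) : w.1.val ≤ 1 := by
  rcases w.2 with h | h <;> rw [h]
  · exact Nat.zero_le _
  · exact Nat.mod_le 1 _

/-- Position of a vertex on the Hamiltonian cycle `0, 1, 0', 1', 2, 3, …, 2n` of the complement
of `C_{2n+1}^c[{0, 1}]`, where `0', 1'` are the new copies. -/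
def expansionCyclePos :
    Fin (2 * n + 1) ⊕ ({0, 1} : Set (Fin (2 * n + 1))) → Fin (2 * (n + 1) + 1) :=
  Sum.elim (fun k => ⟨if k.val ≤ 1 then k.val else k.val + 2, by split_ifs <;> omega⟩)
    fun w => ⟨w.1.val + 2, by omega⟩

lemma expansionCyclePos_injective : Function.Injective (expansionCyclePos (n := n)) := by
  intro u v h
  have h' := congrArg Fin.val h
  rcases u with a | w <;> rcases v with b | w' <;>
    simp only [expansionCyclePos, Sum.elim_inl, Sum.elim_inr] at h' <;>
    grind [val_le_one_of_mem_zero_one]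

def expansionHomComplCycleGraph (hn : 1 ≤ n) :
    expansion (cycleGraph (2 * n + 1))ᶜ {0, 1} →g (cycleGraph (2 * (n + 1) + 1))ᶜ where
  toFun := expansionCyclePos
  map_rel' {u v} huv := by
    rw [expansion_adj_iff] at huv
    refine ⟨expansionCyclePos_injective.ne huv.1, fun hpos => ?_⟩
    have hproj : ¬ (cycleGraph (2 * n + 1)).Adj (expansionProj u) (expansionProj v) := by
      rcases huv.2 with h | h
      · exact h.2
      · exact h ▸ (cycleGraph _).loopless.irrefl _
    rw [cycleGraph_adj_iff_val (by omega)] at hpos hproj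
    rcases u with a | w <;> rcases v with b | w' <;>
      simp only [expansionCyclePos, expansionProj, Sum.elim_inl, Sum.elim_inr, id] at hpos hproj <;>
      grind [val_le_one_of_mem_zero_one]

lemma card_fin_sum_zero_one (hn : 1 ≤ n) :
    Fintype.card (Fin (2 * n + 1) ⊕ ({0, 1} : Set (Fin (2 * n + 1)))) = 2 * n + 3 := by
  have h01 : (0 : Fin (2 * n + 1)) ≠ 1 := by
    rw [Ne, Fin.ext_iff, Fin.val_zero, Fin.val_one', Nat.mod_eq_of_lt (by omega)]
    omega
  rw [Fintype.card_sum, Fintype.card_fin, Set.card_insert _ (by simpa using h01)]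
  simp

end OddAntihole

/-- For the complement of the odd cycle `C_{2n+1}` (`n ≥ 2`),
which is critically `(n+1)`-chromatic, there exists `W` such that the expansion
`C_{2n+1}^c[W]` is critically `(n+2)`-chromatic. -/
theorem oddAntihole_expansion_critical (n : ℕ) (hn : 2 ≤ n) :
    ∃ W : Set (Fin (2 * n + 1)),
      CriticallyChromatic (expansion (SimpleGraph.cycleGraph (2 * n + 1))ᶜ W) (n + 2) := by
  refine ⟨{0, 1}, criticallyChromatic_succ (fun hc => ?_) fun x => ?_⟩
  · have hfree : (expansion (cycleGraph (2 * n + 1))ᶜ {0, 1})ᶜ.CliqueFree 3 :=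
      cliqueFree_compl_expansion (by rw [compl_compl]; exact cycleGraph_cliqueFree_three (by omega))
    have hcard := card_le_two_mul_of_colorable hfree hc
    rw [card_fin_sum_zero_one (by omega)] at hcard
    omega
  · exact (compl_cycleGraph_induce_compl_singleton_colorable (n + 1) _)
      |>.induce_compl_singleton_of_injective (expansionHomComplCycleGraph (by omega))
        expansionCyclePos_injective
end

section
/- Let C be the cycle on the vertices {x_1,...,x_{2r+1}} for some r ≥ 1, and let W = {x_2, x_4, ..., x_{2r}}. Then the expansion C[W] satisfies χ(C[W]) = 4 = χ(C) + 1. -/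
open SimpleGraph MvPolynomial

namespace SimpleGraph

variable {V : Type*} {G : SimpleGraph V}

lemma chromNum_eq_of_chromaticNumber_eq {n : ℕ} (h : G.chromaticNumber = n) :
    chromNum G = n := by
  have hc : G.Colorable n := chromaticNumber_le_iff_colorable.mp h.le
  rw [hc.chromaticNumber_eq_sInf] at h
  exact_mod_cast h

section Expansion

variable {W : Set V}

@[simp]
lemma expansion_adj_inl_inl {u v : V} :
    (expansion G W).Adj (Sum.inl u) (Sum.inl v) ↔ G.Adj u v := by
  rw [expansion, fromRel_adj]
  exact ⟨fun ⟨_, h⟩ => h.elim id fun h => h.symm, fun h => ⟨by simp [h.ne], Or.inl h⟩⟩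

@[simp]
lemma expansion_adj_inl_inr {u : V} {w : W} :
    (expansion G W).Adj (Sum.inl u) (Sum.inr w) ↔ G.Adj u w ∨ u = w := by
  rw [expansion, fromRel_adj]
  simp

@[simp]
lemma expansion_adj_inr_inr {w w' : W} :
    (expansion G W).Adj (Sum.inr w) (Sum.inr w') ↔ G.Adj w w' := by
  rw [expansion, fromRel_adj]
  exact ⟨fun ⟨_, h⟩ => h.elim id fun h => h.symm,
    fun h => ⟨by simp [Subtype.ext_iff, h.ne], Or.inl h⟩⟩

lemma Colorable.expansion {n : ℕ} (hW : G.IsIndepSet W) (hG : G.Colorable n) :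
    (expansion G W).Colorable (n + 1) := by
  obtain ⟨c⟩ := hG
  refine ⟨Coloring.mk (Sum.elim (fun v => (c v).castSucc) fun _ => Fin.last n) ?_⟩
  rintro (u | w) (v | w') hadj
  · exact fun h => c.valid (expansion_adj_inl_inl.mp hadj) (Fin.castSucc_injective n h)
  · exact Fin.castSucc_ne_last (c u)
  · exact (Fin.castSucc_ne_last (c v)).symm
  · have hadj := expansion_adj_inr_inr.mp hadj
    exact (hW w.2 w'.2 hadj.ne hadj).elim

/-- The two copies of `w` form an edge, so two common neighbours of `w` both get the third color. -/
lemma Coloring.expansion_eq_of_adj_of_adj (c : (expansion G W).Coloring (Fin 3)) {u v : V}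
    {w : W} (hu : G.Adj u w) (hv : G.Adj v w) : c (Sum.inl u) = c (Sum.inl v) := by
  have third_color : ∀ a b x y : Fin 3, x ≠ y → a ≠ x → a ≠ y → b ≠ x → b ≠ y → a = b := by
    decide
  exact third_color _ _ _ _ (c.valid (expansion_adj_inl_inr.mpr (Or.inr rfl)))
    (c.valid (expansion_adj_inl_inl.mpr hu)) (c.valid (expansion_adj_inl_inr.mpr (Or.inl hu)))
    (c.valid (expansion_adj_inl_inl.mpr hv)) (c.valid (expansion_adj_inl_inr.mpr (Or.inl hv)))

end Expansion

section Cycle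

lemma cycleGraph_adj_succ {n i : ℕ} (h : i + 1 < n) :
    (cycleGraph n).Adj ⟨i, by omega⟩ ⟨i + 1, h⟩ :=
  pathGraph_le_cycleGraph (pathGraph_adj.mpr (Or.inl rfl))

lemma cycleGraph_adj_last_zero (m : ℕ) :
    (cycleGraph (m + 2)).Adj (Fin.last (m + 1)) 0 := by
  rw [cycleGraph_adj']
  simp

lemma cycleGraph_adj_val {n : ℕ} {u v : Fin n} (h : (cycleGraph n).Adj u v) :
    u.val + 1 = v.val ∨ v.val + 1 = u.val ∨ (u.val = 0 ∧ v.val + 1 = n) ∨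
      (v.val = 0 ∧ u.val + 1 = n) := by
  have hu := u.isLt
  have hv := v.isLt
  have hne : u ≠ v := h.ne
  rw [cycleGraph_adj'] at h
  rcases hne.lt_or_gt with huv | hvu
  · rw [Fin.coe_sub_iff_lt.mpr huv, Fin.sub_val_of_le huv.le] at h
    have := Fin.lt_def.mp huv
    omega
  · rw [Fin.coe_sub_iff_lt.mpr hvu, Fin.sub_val_of_le hvu.le] at h
    have := Fin.lt_def.mp hvu
    omega

lemma isIndepSet_odd_cycleGraph (r : ℕ) :
    (cycleGraph (2 * r + 1)).IsIndepSet {v | Odd (v : ℕ)} := by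
  intro u hu v hv _ hadj
  have := cycleGraph_adj_val hadj
  have := v.isLt
  simp only [Set.mem_ofPred_eq, Nat.odd_iff] at hu hv
  omega

/-- In a 3-coloring the fresh copies of the odd vertices force all even vertices `0, 2, …, 2r`
to share a color, but `2r` and `0` are adjacent. -/
lemma not_colorable_three_expansion_odd_cycleGraph {r : ℕ} (hr : 1 ≤ r) :
    ¬ (expansion (cycleGraph (2 * r + 1)) {v | Odd (v : ℕ)}).Colorable 3 := by
  rintro ⟨c⟩
  have evens_same_color : ∀ k (hk : k ≤ r),
      c (Sum.inl ⟨2 * k, by omega⟩) = c (Sum.inl ⟨0, by omega⟩) := by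
    intro k
    induction k with
    | zero => intro _; rfl
    | succ k ih =>
      intro hk
      let w : {v : Fin (2 * r + 1) | Odd (v : ℕ)} := ⟨⟨2 * k + 1, by omega⟩, odd_two_mul_add_one k⟩
      rw [← ih (by omega)]
      exact c.expansion_eq_of_adj_of_adj (w := w)
        (cycleGraph_adj_succ (i := 2 * k + 1) (by omega)).symm
        (cycleGraph_adj_succ (i := 2 * k) (by omega))
  obtain ⟨m, rfl⟩ : ∃ m, r = m + 1 := ⟨r - 1, by omega⟩
  refine c.valid (expansion_adj_inl_inl.mpr ?_) (evens_same_color (m + 1) le_rfl)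
  exact cycleGraph_adj_last_zero (2 * m + 1)

end Cycle

end SimpleGraph

/-- Vertex `x_i` of the cycle is `i - 1 : Fin (2 * r + 1)`. -/
theorem oddCycle_expansion_evens (r : ℕ) (hr : 1 ≤ r) :
    chromNum (expansion (SimpleGraph.cycleGraph (2 * r + 1))
        {v : Fin (2 * r + 1) | ∃ j : ℕ, 1 ≤ j ∧ j ≤ r ∧ (v : ℕ) = 2 * j - 1}) = 4 ∧
      4 = chromNum (SimpleGraph.cycleGraph (2 * r + 1)) + 1 := by
  have hW : {v : Fin (2 * r + 1) | ∃ j : ℕ, 1 ≤ j ∧ j ≤ r ∧ (v : ℕ) = 2 * j - 1} =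
      {v : Fin (2 * r + 1) | Odd (v : ℕ)} := by
    ext v
    have := v.isLt
    simp only [Set.mem_ofPred_eq, Nat.odd_iff]
    exact ⟨fun ⟨j, _, _, hj⟩ => by omega, fun h => ⟨(v + 1) / 2, by omega, by omega, by omega⟩⟩
  have hC : (cycleGraph (2 * r + 1)).chromaticNumber = (3 : ℕ) := by
    exact_mod_cast chromaticNumber_cycleGraph_of_odd _ (by omega) (odd_two_mul_add_one r)
  refine ⟨chromNum_eq_of_chromaticNumber_eq ?_, by rw [chromNum_eq_of_chromaticNumber_eq hC]⟩
  rw [hW, show ((4 : ℕ) : ℕ∞) = (3 : ℕ) + 1 by norm_num,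
    chromaticNumber_eq_iff_colorable_not_colorable]
  exact ⟨(chromaticNumber_le_iff_colorable.mp hC.le).expansion (isIndepSet_odd_cycleGraph r),
    not_colorable_three_expansion_odd_cycleGraph hr⟩
end

section
/- Let G be a finite simple graph on vertices {x_1,...,x_n} with cover ideal J = J(G) ⊆ R = k[x_1,...,x_n]. Then Ass(R/J^2) ⊆ Ass(R/J^3). -/
open SimpleGraph MvPolynomial

/-!
Write `J = J(G)`. A monomial `x^a` lies in `J^m` iff `a` dominates a sum of `m` indicator
vectors of vertex covers, and the heart of the proof is `J^3 : J = J^2`. Suppose `a + 1_C`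
dominates three covers for every cover `C`. Testing `C = V \ {u}` shows `a_u + a_v ≥ 2` on every
edge. If the graph induced on `{a = 1}` were not bipartite, a shortest odd closed walk in it,
of length `2k+1`, would have `k` pairwise non-adjacent odd positions; together with the zeros
of `a` they form an independent set, whose complement `C` forces the three covers to miss
at least `3k+1` positions of the walk, while a cover misses at most `k` of them. So that graph
is bipartite, and its two colour classes, each joined with `{a ≥ 2}`, are covers `D₁, D₂` with
`1_{D₁} + 1_{D₂} ≤ a`.
Finally, `R/(I : J)` embeds into `(R/I)^s` when `J` is generated by `s` elements, so
`Ass(R/(I : J)) ⊆ Ass(R/I)`.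
-/

open Finset

section AssociatedPrimes

variable {R : Type*}

theorem associatedPrimes_pi_subset [CommSemiring R] {ι : Type*} [Finite ι] (M : Type*)
    [AddCommMonoid M] [Module R M] : associatedPrimes R (ι → M) ⊆ associatedPrimes R M := by
  suffices h : ∀ m : ℕ, associatedPrimes R (Fin m → M) ⊆ associatedPrimes R M by
    obtain ⟨m, ⟨e⟩⟩ := Finite.exists_equiv_fin ι
    rw [LinearEquiv.AssociatedPrimes.eq (LinearEquiv.funCongrLeft R M e.symm)]
    exact h m
  intro m
  induction m with
  | zero => simp [associatedPrimes.eq_empty_of_subsingleton]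
  | succ m ih =>
    rw [← LinearEquiv.AssociatedPrimes.eq (Fin.consLinearEquiv R fun _ ↦ M),
      associatedPrimes.prod]
    exact Set.union_subset subset_rfl ih

theorem associatedPrimes_quotient_colon_subset [CommRing R] (I J : Ideal R) (hJ : J.FG) :
    associatedPrimes R (R ⧸ I.colon (J : Set R)) ⊆ associatedPrimes R (R ⧸ I) := by
  obtain ⟨s, rfl⟩ := hJ
  let φ : R →ₗ[R] (s → R ⧸ I) :=
    LinearMap.pi fun g ↦ I.mkQ ∘ₗ LinearMap.mulRight R (g : R)
  have hker : LinearMap.ker φ = I.colon (Ideal.span (s : Set R) : Set R) := by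
    ext r
    simp [φ, Submodule.colon_span, Submodule.mem_colon, funext_iff, -map_mul,
      Ideal.Quotient.eq_zero_iff_mem]
  rw [← hker]
  exact (associatedPrimes.subset_of_injective (LinearMap.ker_eq_bot.mp
    (Submodule.ker_liftQ_eq_bot' _ φ rfl))).trans (associatedPrimes_pi_subset _)

end AssociatedPrimes

section CoverSums

variable {V : Type*} [DecidableEq V]

noncomputable def indicatorVec (s : Finset V) : V →₀ ℕ :=
  Finsupp.onFinset s (fun v ↦ if v ∈ s then 1 else 0) (by simp)

@[simp]
theorem indicatorVec_apply (s : Finset V) (v : V) :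
    indicatorVec s v = if v ∈ s then 1 else 0 :=
  rfl

variable (G : SimpleGraph V)

/-- For `G` on `{x_1, …, x_n}` these are the exponents of the monomials of `J(G)^m`. -/
def DominatesCoverSum (m : ℕ) (a : V →₀ ℕ) : Prop :=
  ∃ D : Fin m → Finset V, (∀ t, G.IsVertexCover (D t)) ∧ ∑ t, indicatorVec (D t) ≤ a

theorem dominatesCoverSum_zero (a : V →₀ ℕ) : DominatesCoverSum G 0 a :=
  ⟨Fin.elim0, fun t ↦ t.elim0, by simp⟩

variable {G}

theorem DominatesCoverSum.add {m m' : ℕ} {a b : V →₀ ℕ} (ha : DominatesCoverSum G m a)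
    (hb : DominatesCoverSum G m' b) : DominatesCoverSum G (m + m') (a + b) := by
  obtain ⟨D, hD, hDa⟩ := ha
  obtain ⟨E, hE, hEb⟩ := hb
  refine ⟨Fin.append D E, Fin.addCases (by simpa using hD) (by simpa using hE), ?_⟩
  rw [Fin.sum_univ_add]
  simpa using add_le_add hDa hEb

theorem card_filter_mem_le_of_sum_indicatorVec_le {m : ℕ} {D : Fin m → Finset V} {a : V →₀ ℕ}
    (h : ∑ t, indicatorVec (D t) ≤ a) (v : V) : #{t | v ∈ D t} ≤ a v := by
  simpa [Finsupp.finsetSum_apply, Finset.sum_boole] using Finsupp.le_def.1 h v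

theorem DominatesCoverSum.le_add_of_adj {m : ℕ} {a : V →₀ ℕ} (h : DominatesCoverSum G m a)
    {u v : V} (huv : G.Adj u v) : m ≤ a u + a v := by
  obtain ⟨D, hD, hle⟩ := h
  calc m = #(univ : Finset (Fin m)) := by simp
    _ ≤ #(({t | u ∈ D t} : Finset _) ∪ ({t | v ∈ D t} : Finset _)) :=
        card_le_card fun t _ ↦ by simpa [← filter_or] using hD t huv
    _ ≤ a u + a v := (card_union_le _ _).trans (add_le_add
        (card_filter_mem_le_of_sum_indicatorVec_le hle u)
        (card_filter_mem_le_of_sum_indicatorVec_le hle v))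

end CoverSums

section OddCycles

variable {V : Type*} {G : SimpleGraph V}

theorem SimpleGraph.Walk.exists_loop_of_adj_getVert {u v : V} (w : G.Walk u v) {i j : ℕ}
    (hij : i ≤ j) (hj : j ≤ w.length) (hadj : G.Adj (w.getVert j) (w.getVert i)) :
    ∃ c : G.Walk (w.getVert i) (w.getVert i), c.length = j - i + 1 := by
  let p : G.Walk (w.getVert i) (w.getVert j) :=
    ((w.drop i).take (j - i)).copy rfl (by rw [drop_getVert, Nat.add_sub_cancel' hij])
  refine ⟨p.concat hadj, ?_⟩
  simp only [p, length_concat, length_copy, take_length, drop_length]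
  omega

theorem two_mul_card_le_of_forall_add_one_notMem {n : ℕ} [NeZero n] {F : Finset (Fin n)}
    (hF : ∀ x ∈ F, x + 1 ∉ F) : 2 * #F ≤ n := by
  have hdisj : Disjoint F (F.map (addRightEmbedding 1)) := by
    simpa [disjoint_right] using fun x hx ↦ hF x hx
  calc 2 * #F = #(F ∪ F.map (addRightEmbedding 1)) := by
        rw [card_union_of_disjoint hdisj, card_map]; ring
    _ ≤ n := by simpa using card_le_univ (F ∪ F.map (addRightEmbedding 1))

theorem card_filter_notMem_le_of_isVertexCover [DecidableEq V] {k : ℕ}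
    {v : Fin (2 * k + 1) → V} (hv : ∀ x, G.Adj (v x) (v (x + 1))) {C : Finset V}
    (hC : G.IsVertexCover C) :
    #{x | v x ∉ C} ≤ k := by
  have := two_mul_card_le_of_forall_add_one_notMem (F := {x | v x ∉ C}) fun x hx hx1 ↦ by
    simp only [mem_filter, mem_univ, true_and] at hx hx1
    exact (hC (hv x)).elim hx hx1
  omega

/-- A shortest odd closed walk has no chord between two of its odd positions. -/
theorem exists_odd_cycle_of_not_colorable_two (h : ¬ G.Colorable 2) :
    ∃ (k : ℕ) (v : Fin (2 * k + 1) → V), (∀ x, G.Adj (v x) (v (x + 1))) ∧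
      ∃ T : Finset (Fin (2 * k + 1)), #T = k ∧ ∀ x ∈ T, ∀ y ∈ T, ¬ G.Adj (v x) (v y) := by
  classical
  have hex : ∃ l, Odd l ∧ ∃ u, ∃ w : G.Walk u u, w.length = l := by
    simp only [SimpleGraph.two_colorable_iff_forall_loop_even, not_forall,
      Nat.not_even_iff_odd] at h
    obtain ⟨u, w, hw⟩ := h
    exact ⟨_, hw, u, w, rfl⟩
  obtain ⟨⟨k, hk⟩, u, w, hw⟩ := Nat.find_spec hex
  rw [hk] at hw
  have hmin : ∀ l < 2 * k + 1, Odd l → ∀ u, ∀ w : G.Walk u u, w.length ≠ l := by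
    intro l hl hodd u w hw
    exact Nat.find_min hex (hk ▸ hl) ⟨hodd, u, w, hw⟩
  refine ⟨k, fun x ↦ w.getVert x, fun x ↦ ?_, univ.map ⟨fun i : Fin k ↦ ⟨2 * i + 1, by omega⟩,
    fun i j hij ↦ by simpa [Fin.ext_iff] using hij⟩, by simp, ?_⟩
  · have hx : (x : ℕ) < w.length := by omega
    by_cases hlast : x = Fin.last (2 * k)
    · have hu : w.getVert (2 * k + 1) = u := hw ▸ w.getVert_length
      simpa [hlast, hu] using w.adj_getVert_succ hx
    · simpa [Fin.val_add_one, hlast] using w.adj_getVert_succ hx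
  · simp only [mem_map, mem_univ, true_and, forall_exists_index,
      forall_apply_eq_imp_iff]
    intro i j hadj
    wlog hij : i < j generalizing i j
    · rcases (not_lt.1 hij).eq_or_lt with rfl | hji
      · exact G.irrefl hadj
      · exact this j i hadj.symm hji
    obtain ⟨c, hc⟩ := w.exists_loop_of_adj_getVert (i := 2 * i + 1) (j := 2 * j + 1)
      (by omega) (by omega) hadj.symm
    exact hmin c.length (by omega) ⟨j - i, by omega⟩ _ c rfl

end OddCycles

section Decomposition

variable {V : Type*} {G : SimpleGraph V} {a : V →₀ ℕ}

abbrev onesGraph (G : SimpleGraph V) (a : V →₀ ℕ) : SimpleGraph V :=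
  ((⊤ : G.Subgraph).induce {v | a v = 1}).spanningCoe

theorem onesGraph_adj {u v : V} : (onesGraph G a).Adj u v ↔ a u = 1 ∧ a v = 1 ∧ G.Adj u v := by
  simp

variable [Fintype V] [DecidableEq V]

theorem two_le_add_of_forall_dominatesCoverSum_three
    (H : ∀ C : Finset V, G.IsVertexCover C → DominatesCoverSum G 3 (a + indicatorVec C))
    {u v : V} (huv : G.Adj u v) : 2 ≤ a u + a v := by
  have hC : G.IsVertexCover ↑({u}ᶜ : Finset V) := by simp
  have hu : u ∉ ({u}ᶜ : Finset V) := by simp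
  have hv : v ∈ ({u}ᶜ : Finset V) := by simp [huv.ne']
  have := (H _ hC).le_add_of_adj huv
  simp only [Finsupp.add_apply, indicatorVec_apply, hu, hv, if_false, if_true] at this
  omega

theorem dominatesCoverSum_two_of_colorable_onesGraph
    (h2 : ∀ ⦃u v⦄, G.Adj u v → 2 ≤ a u + a v) (hcol : (onesGraph G a).Colorable 2) :
    DominatesCoverSum G 2 a := by
  obtain ⟨c⟩ := hcol
  refine ⟨fun i ↦ {v | 2 ≤ a v ∨ a v = 1 ∧ c v = i}, fun i u v huv ↦ ?_, ?_⟩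
  · have := h2 huv
    by_cases hu : a u = 1 <;> by_cases hv : a v = 1
    · have hne : c u ≠ c v := c.valid (by simp [hu, hv, huv])
      have : c u = i ∨ c v = i := by omega
      simpa [hu, hv] using this
    all_goals simp only [coe_filter, mem_univ, true_and, Set.mem_ofPred_eq]; omega
  · rw [Finsupp.le_def]
    intro v
    simp only [Fin.sum_univ_two, Finsupp.add_apply, indicatorVec_apply, mem_filter, mem_univ,
      true_and]
    split_ifs <;> omega

theorem isIndepSet_zeros_union (h2 : ∀ ⦃u v⦄, G.Adj u v → 2 ≤ a u + a v) {S : Finset V}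
    (hS1 : ∀ u ∈ S, a u = 1) (hS : G.IsIndepSet S) :
    G.IsIndepSet ↑(({u | a u = 0} : Finset V) ∪ S) := by
  intro u hu w hw _ huw
  have := h2 huw
  simp only [coe_union, coe_filter, mem_univ, true_and, Set.mem_union, Set.mem_ofPred_eq,
    mem_coe] at hu hw
  rcases hu with hu | hu <;> rcases hw with hw | hw
  · omega
  · have := hS1 w hw; omega
  · have := hS1 u hu; omega
  · exact hS hu hw huw.ne huw

theorem colorable_onesGraph_of_forall_dominatesCoverSum_three
    (H : ∀ C : Finset V, G.IsVertexCover C → DominatesCoverSum G 3 (a + indicatorVec C)) :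
    (onesGraph G a).Colorable 2 := by
  by_contra hbip
  obtain ⟨k, v, hv, T, hTk, hT⟩ := exists_odd_cycle_of_not_colorable_two hbip
  have ha : ∀ x, a (v x) = 1 := fun x ↦ (onesGraph_adj.1 (hv x)).1
  have hvG : ∀ x, G.Adj (v x) (v (x + 1)) := fun x ↦ (onesGraph_adj.1 (hv x)).2.2
  let C : Finset V := (({u | a u = 0} : Finset V) ∪ T.image v)ᶜ
  have hC : G.IsVertexCover C := by
    rw [coe_compl, SimpleGraph.isVertexCover_compl]
    refine isIndepSet_zeros_union (fun _ _ ↦ two_le_add_of_forall_dominatesCoverSum_three H)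
      (by simp [ha]) ?_
    rw [coe_image]
    rintro _ ⟨x, hx, rfl⟩ _ ⟨y, hy, rfl⟩ _ huv
    exact hT x hx y hy (onesGraph_adj.2 ⟨ha x, ha y, huv⟩)
  obtain ⟨D, hD, hle⟩ := H C hC
  have hmiss : ∀ x, 1 + (if x ∈ T then 1 else 0) ≤ #{t | v x ∉ D t} := by
    intro x
    have h1 := card_filter_mem_le_of_sum_indicatorVec_le hle (v x)
    have h2 := card_filter_add_card_filter_not (s := univ) (fun t ↦ v x ∈ D t)
    simp only [Finsupp.add_apply, ha, indicatorVec_apply] at h1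
    rw [card_univ, Fintype.card_fin] at h2
    by_cases hx : x ∈ T
    · have hxC : v x ∉ C := by simp [C, mem_image_of_mem v hx]
      simp only [hxC, if_false, hx, if_true] at h1 ⊢
      omega
    · simp only [hx, if_false]
      split_ifs at h1 <;> omega
  have hcount : 2 * k + 1 + k ≤ 3 * k := calc
    2 * k + 1 + k = ∑ x, (1 + if x ∈ T then 1 else 0) := by simp [sum_add_distrib, hTk]
    _ ≤ ∑ x, #{t | v x ∉ D t} := sum_le_sum fun x _ ↦ hmiss x
    _ = ∑ t, #{x | v x ∉ D t} := by simp only [card_filter]; exact sum_comm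
    _ ≤ ∑ _t : Fin 3, k := sum_le_sum fun t _ ↦ card_filter_notMem_le_of_isVertexCover hvG (hD t)
    _ = 3 * k := by simp
  omega

theorem dominatesCoverSum_two_of_forall_dominatesCoverSum_three
    (H : ∀ C : Finset V, G.IsVertexCover C → DominatesCoverSum G 3 (a + indicatorVec C)) :
    DominatesCoverSum G 2 a :=
  dominatesCoverSum_two_of_colorable_onesGraph
    (fun _ _ ↦ two_le_add_of_forall_dominatesCoverSum_three H)
    (colorable_onesGraph_of_forall_dominatesCoverSum_three H)

end Decomposition

section CoverIdeal

open MvPolynomial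

variable {k : Type*} [Field k] {n : ℕ} {G : SimpleGraph (Fin n)}

theorem mem_coverIdeal_iff {p : MvPolynomial (Fin n) k} :
    p ∈ coverIdeal k G ↔ ∀ ⦃i j⦄, G.Adj i j → ∀ d ∈ p.support, d i ≠ 0 ∨ d j ≠ 0 := by
  simp [coverIdeal, Submodule.mem_iInf, ← Set.image_pair, mem_ideal_span_X_image]

theorem monomial_indicatorVec_mem_coverIdeal {C : Finset (Fin n)} (hC : G.IsVertexCover C) :
    monomial (indicatorVec C) (1 : k) ∈ coverIdeal k G := by
  rw [mem_coverIdeal_iff]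
  intro i j hij d hd
  rw [mem_singleton.1 (support_monomial_subset hd)]
  simpa using hC hij

theorem dominatesCoverSum_one_of_mem_coverIdeal {p : MvPolynomial (Fin n) k}
    (hp : p ∈ coverIdeal k G) {d : Fin n →₀ ℕ} (hd : d ∈ p.support) :
    DominatesCoverSum G 1 d := by
  refine ⟨fun _ ↦ d.support, fun _ i j hij ↦ ?_, fun v ↦ ?_⟩
  · simpa using mem_coverIdeal_iff.1 hp hij d hd
  · simp only [univ_unique, sum_singleton, indicatorVec_apply, Finsupp.mem_support_iff]
    split_ifs <;> omega

theorem dominatesCoverSum_of_mem_coverIdeal_pow {m : ℕ} {p : MvPolynomial (Fin n) k}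
    (hp : p ∈ coverIdeal k G ^ m) : ∀ d ∈ p.support, DominatesCoverSum G m d := by
  induction m generalizing p with
  | zero => exact fun d _ ↦ dominatesCoverSum_zero G d
  | succ m ih =>
    rw [pow_succ] at hp
    refine Submodule.mul_induction_on hp (fun q hq r hr d hd ↦ ?_) (fun x y hx hy d hd ↦ ?_)
    · obtain ⟨d₁, hd₁, d₂, hd₂, rfl⟩ := Finset.mem_add.1 (support_mul q r hd)
      exact (ih hq d₁ hd₁).add (dominatesCoverSum_one_of_mem_coverIdeal hr hd₂)
    · rcases Finset.mem_union.1 (support_add hd) with h | h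
      exacts [hx d h, hy d h]

theorem monomial_mem_coverIdeal_pow_s12 {m : ℕ} {d : Fin n →₀ ℕ} (h : DominatesCoverSum G m d)
    (c : k) : monomial d c ∈ coverIdeal k G ^ m := by
  obtain ⟨D, hD, hle⟩ := h
  have hsplit : monomial d c =
      (∏ t, monomial (indicatorVec (D t)) (1 : k)) * monomial (d - ∑ t, indicatorVec (D t)) c := by
    rw [← monomial_sum_one, monomial_mul, one_mul, add_tsub_cancel_of_le hle]
  rw [hsplit]
  refine Ideal.mul_mem_right _ _ ?_
  simpa using Ideal.prod_mem_prod (s := univ) (I := fun _ ↦ coverIdeal k G)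
    fun t _ ↦ monomial_indicatorVec_mem_coverIdeal (hD t)

theorem coverIdeal_pow_three_colon :
    (coverIdeal k G ^ 3).colon (coverIdeal k G : Set (MvPolynomial (Fin n) k)) =
      coverIdeal k G ^ 2 := by
  refine le_antisymm (fun r hr ↦ ?_) (fun r hr ↦ Submodule.mem_colon.2 fun s hs ↦ ?_)
  · rw [r.as_sum]
    refine Ideal.sum_mem _ fun d hd ↦ monomial_mem_coverIdeal_pow_s12 ?_ _
    refine dominatesCoverSum_two_of_forall_dominatesCoverSum_three fun C hC ↦ ?_
    refine dominatesCoverSum_of_mem_coverIdeal_pow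
      (Submodule.mem_colon.1 hr _ (monomial_indicatorVec_mem_coverIdeal hC)) _ ?_
    rw [smul_eq_mul, mem_support_iff, coeff_mul_monomial, mul_one]
    exact mem_support_iff.1 hd
  · rw [smul_eq_mul, pow_succ]
    exact Ideal.mul_mem_mul hr hs

end CoverIdeal

/-- For any finite simple graph `G` with cover ideal `J`,
`Ass(R/J²) ⊆ Ass(R/J³)`. -/
theorem ass_sq_subset_ass_cube {k : Type} [Field k] {n : ℕ}
    (G : SimpleGraph (Fin n)) :
    associatedPrimes (MvPolynomial (Fin n) k)
        (MvPolynomial (Fin n) k ⧸ (coverIdeal k G) ^ 2) ⊆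
      associatedPrimes (MvPolynomial (Fin n) k)
        (MvPolynomial (Fin n) k ⧸ (coverIdeal k G) ^ 3) := by
  rw [← coverIdeal_pow_three_colon]
  exact associatedPrimes_quotient_colon_subset _ _ (IsNoetherian.noetherian _)
end
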